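/- Every extraspecial group of order q^(2m+1) is isomorphic to a central product of m extraspecial groups of order q^3. -/

import Mathlib

/-- A finite `q`-group `E` is extraspecial if its center, commutator subgroup
and Frattini subgroup all coincide and have order `q`. -/
def IsExtraspecial (q : ℕ) (E : Type*) [Group E] : Prop :=
  IsPGroup q E ∧ Nat.card (Subgroup.center E) = q ∧
    commutator E = Subgroup.center E ∧ frattini E = Subgroup.center E


open Subgroup
open scoped commutatorElement

section Helpers

variable {G : Type*} [Group G]

lemma my_eq_of_le_of_card_le [Finite G] {H K : Subgroup G} (hle : H ≤ K)
    (h : Nat.card K ≤ Nat.card H) : H = K := by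
  have e : Nat.card (H.subgroupOf K) = Nat.card H :=
    Nat.card_congr (subgroupOfEquivOfLe hle).toEquiv
  have hd : Nat.card (H.subgroupOf K) ∣ Nat.card K := card_subgroup_dvd_card _
  have hcard : Nat.card (H.subgroupOf K) = Nat.card K := by
    refine Nat.le_antisymm (Nat.le_of_dvd Nat.card_pos hd) ?_
    omega
  exact le_antisymm hle (subgroupOf_eq_top.mp (eq_top_of_card_eq _ hcard))

lemma my_eq_of_le_of_prime_card {q : ℕ} (hq : q.Prime) [Finite G] {H K : Subgroup G}
    (hle : H ≤ K) (hK : Nat.card K = q) (hH : H ≠ ⊥) : H = K := by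
  have e : Nat.card (H.subgroupOf K) = Nat.card H :=
    Nat.card_congr (subgroupOfEquivOfLe hle).toEquiv
  have hd : Nat.card (H.subgroupOf K) ∣ Nat.card K := card_subgroup_dvd_card _
  rw [e, hK] at hd
  rcases (Nat.dvd_prime hq).mp hd with h1 | h1
  · exact absurd (card_eq_one.mp h1) hH
  · exact my_eq_of_le_of_card_le hle (by omega)

lemma my_coatom_normal_index {q : ℕ} (hq : q.Prime) [Finite G] (hG : IsPGroup q G)
    {M : Subgroup G} (hM : IsCoatom M) : M.Normal ∧ M.index = q := by
  haveI : Fact q.Prime := ⟨hq⟩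
  haveI : Group.IsNilpotent G := hG.isNilpotent
  have hnorm : M.Normal :=
    Subgroup.NormalizerCondition.normal_of_coatom M (normalizerCondition_of_isNilpotent (G := G)) hM
  haveI := hnorm
  refine ⟨hnorm, ?_⟩
  -- subgroups of the quotient are ⊥ or ⊤
  have hbt : ∀ K : Subgroup (G ⧸ M), K = ⊥ ∨ K = ⊤ := by
    intro K
    have hle : M ≤ comap (QuotientGroup.mk' M) K := by
      intro m hm
      have : ((m : G) : G ⧸ M) = 1 := (QuotientGroup.eq_one_iff m).mpr hm
      simp only [mem_comap, QuotientGroup.mk'_apply, this]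
      exact K.one_mem
    rcases eq_or_lt_of_le hle with heq | hlt
    · left
      rw [← map_comap_eq_self_of_surjective (QuotientGroup.mk'_surjective M) K, ← heq,
        QuotientGroup.map_mk'_self]
    · right
      rw [← map_comap_eq_self_of_surjective (QuotientGroup.mk'_surjective M) K, hM.2 _ hlt,
        map_top_of_surjective _ (QuotientGroup.mk'_surjective M)]
  -- the quotient is nontrivial
  obtain ⟨g, hg⟩ : ∃ g : G, (g : G ⧸ M) ≠ 1 := by
    by_contra hcon
    push_neg at hcon
    refine hM.1 (top_le_iff.mp ?_)
    intro g _
    exact (QuotientGroup.eq_one_iff g).mp (hcon g)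
  have hq2 : q ∣ Nat.card (G ⧸ M) := by
    have hpg : IsPGroup q (G ⧸ M) := hG.to_quotient M
    obtain ⟨n, hn⟩ := IsPGroup.iff_card.mp hpg
    rcases n with _ | n
    · simp only [pow_zero] at hn
      haveI : Subsingleton (G ⧸ M) := (Nat.card_eq_one_iff_unique.mp hn).1
      exact absurd (Subsingleton.elim _ _) hg
    · rw [hn]
      exact dvd_pow_self q (Nat.succ_ne_zero n)
  obtain ⟨h, hh⟩ := exists_prime_orderOf_dvd_card' (G := G ⧸ M) q hq2
  have hhne : h ≠ 1 := by
    intro h1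
    rw [h1, orderOf_one] at hh
    exact hq.one_lt.ne (by omega)
  have : zpowers h = ⊤ := by
    rcases hbt (zpowers h) with hb | ht
    · exact absurd (zpowers_eq_bot.mp hb) hhne
    · exact ht
  rw [index_eq_card, ← card_top (G := G ⧸ M), ← this, Nat.card_zpowers, hh]

lemma my_coatom_abelian_quotient {q : ℕ} (hq : q.Prime) [Finite G] (hG : IsPGroup q G)
    {M : Subgroup G} (hM : IsCoatom M) (a b : G) : ⁅a, b⁆ ∈ M := by
  obtain ⟨hnorm, hidx⟩ := my_coatom_normal_index hq hG hM
  haveI := hnorm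
  haveI : Fact q.Prime := ⟨hq⟩
  have hcard : Nat.card (G ⧸ M) = q := by rw [← index_eq_card, hidx]
  haveI : IsCyclic (G ⧸ M) := isCyclic_of_prime_card hcard
  letI : CommGroup (G ⧸ M) := IsCyclic.commGroup
  have : ((⁅a, b⁆ : G) : G ⧸ M) = 1 := by
    rw [show ((⁅a, b⁆ : G) : G ⧸ M) = ⁅(a : G ⧸ M), (b : G ⧸ M)⁆ from
      map_commutatorElement (QuotientGroup.mk' M) a b]
    exact commutatorElement_eq_one_iff_commute.mpr (mul_comm _ _)
  exact (QuotientGroup.eq_one_iff _).mp this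

lemma my_pow_q_mem_frattini {q : ℕ} (hq : q.Prime) [Finite G] (hG : IsPGroup q G) (g : G) :
    g ^ q ∈ frattini G := by
  rw [frattini, Order.radical]
  rw [mem_iInf]
  intro M
  rw [mem_iInf]
  intro hM
  obtain ⟨hnorm, hidx⟩ := my_coatom_normal_index hq hG hM
  haveI := hnorm
  rw [← hidx]
  exact pow_index_mem M g

lemma my_commutator_le_frattini {q : ℕ} (hq : q.Prime) [Finite G] (hG : IsPGroup q G) :
    commutator G ≤ frattini G := by
  rw [frattini, Order.radical]
  refine le_iInf fun M => le_iInf fun hM => ?_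
  rw [_root_.commutator_def, Subgroup.commutator_le]
  intro a _ b _
  exact my_coatom_abelian_quotient hq hG hM a b

end Helpers


open Subgroup


section Part2

variable {G H : Type*} [Group G] [Group H]

lemma my_map_center (e : G ≃* H) : map e.toMonoidHom (center G) = center H := by
  ext h
  simp only [mem_map, mem_center_iff]
  constructor
  · rintro ⟨z, hz, rfl⟩ g
    have h1 := hz (e.symm g)
    have h2 : e (e.symm g * z) = e (z * e.symm g) := congrArg e h1
    simpa [map_mul] using h2
  · intro hh
    refine ⟨e.symm h, fun g => ?_, by simp⟩
    have h1 := hh (e g)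
    apply e.injective
    simpa [map_mul] using h1

lemma my_isExtraspecial_congr {q : ℕ} (e : G ≃* H) (h : IsExtraspecial q G) :
    IsExtraspecial q H := by
  obtain ⟨h1, h2, h3, h4⟩ := h
  have hc : map e.toMonoidHom (center G) = center H := my_map_center e
  refine ⟨h1.of_equiv e, ?_, ?_, ?_⟩
  · rw [← hc, ← h2]
    exact (Nat.card_congr (equivMapOfInjective _ e.toMonoidHom e.injective).toEquiv).symm
  · rw [← hc, ← h3, _root_.commutator_def, _root_.commutator_def,
      ← map_top_of_surjective e.toMonoidHom e.surjective, ← map_commutator]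
  · rw [← hc, ← h4]
    have hr := OrderIso.map_radical (e.mapSubgroup)
    rw [MulEquiv.mapSubgroup_apply] at hr
    exact (show frattini H = Order.radical (Subgroup H) from rfl).trans hr.symm

def myCommHom {E : Type*} [Group E] (a : E) (h : ∀ w, ⁅a, w⁆ ∈ center E) :
    E →* center E where
  toFun w := ⟨⁅a, w⁆, h w⟩
  map_one' := Subtype.ext (commutatorElement_one_right a)
  map_mul' b c := by
    apply Subtype.ext
    show ⁅a, b * c⁆ = ⁅a, b⁆ * ⁅a, c⁆
    have h1 : ⁅a, b * c⁆ = ⁅a, b⁆ * (b * ⁅a, c⁆ * b⁻¹) := by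
      simp only [commutatorElement_def]
      group
    have h2 : b * ⁅a, c⁆ = ⁅a, c⁆ * b := (Subgroup.mem_center_iff.mp (h c)) b
    rw [h1, h2]
    group

@[simp] lemma myCommHom_apply {E : Type*} [Group E] (a : E) (h : ∀ w, ⁅a, w⁆ ∈ center E)
    (w : E) : (myCommHom a h w : E) = ⁅a, w⁆ := rfl

/-- Weakened extraspecial-like condition used for the induction. -/
def MyPre (q : ℕ) (E : Type*) [Group E] : Prop :=
  IsPGroup q E ∧ Nat.card (Subgroup.center E) = q ∧
    (∀ a b : E, ⁅a, b⁆ ∈ center E) ∧ ∀ g : E, g ^ q ∈ center E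

lemma my_pre_of_isExtraspecial {q : ℕ} {E : Type*} [Group E] [Finite E] (hq : q.Prime)
    (h : IsExtraspecial q E) : MyPre q E := by
  obtain ⟨h1, h2, h3, h4⟩ := h
  refine ⟨h1, h2, fun a b => ?_, fun g => ?_⟩
  · rw [← h3]
    exact commutator_mem_commutator (mem_top a) (mem_top b)
  · rw [← h4]
    exact my_pow_q_mem_frattini hq h1 g

end Part2

section Main

universe u

lemma my_exists_S_C {q : ℕ} (hq : q.Prime) (E : Type u) [Group E] [Finite E] (hP : MyPre q E)
    (n : ℕ) (hcard : Nat.card E = q ^ (2 * n + 3)) :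
    ∃ S C : Subgroup E,
      IsExtraspecial q S ∧ Nat.card S = q ^ 3 ∧ center E ≤ S ∧ center E ≤ C ∧
      (∀ s ∈ S, ∀ c ∈ C, Commute s c) ∧ S ⊔ C = ⊤ ∧
      Nat.card C = q ^ (2 * n + 1) ∧ MyPre q C ∧
      center E ≤ map C.subtype (center C) := by
  haveI : Fact q.Prime := ⟨hq⟩
  obtain ⟨hpg, hZcard, hcommZ, hpow⟩ := hP
  set Z := center E with hZdef
  have hq1 : 1 < q := hq.one_lt
  -- find a noncentral element
  obtain ⟨x, hx⟩ : ∃ x : E, x ∉ Z := by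
    by_contra h
    push_neg at h
    have htop : Z = ⊤ := top_le_iff.mp fun g _ => h g
    rw [htop, card_top, hcard] at hZcard
    have h1 : q ^ 1 < q ^ (2 * n + 3) := Nat.pow_lt_pow_right hq1 (by omega)
    rw [pow_one] at h1
    omega
  obtain ⟨y, hxy⟩ : ∃ y : E, ¬ Commute x y := by
    by_contra h
    push_neg at h
    exact hx (mem_center_iff.mpr fun g => (h g).symm)
  set g0 := ⁅x, y⁆ with hg0
  have hg0Z : g0 ∈ Z := hcommZ x y
  have hg0ne : g0 ≠ 1 := fun h => hxy (commutatorElement_eq_one_iff_commute.mp h)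
  have hZg : zpowers g0 = Z :=
    my_eq_of_le_of_prime_card hq (zpowers_le.mpr hg0Z) hZcard (by rwa [Ne, zpowers_eq_bot])
  set S := Subgroup.closure ({x, y} : Set E) with hS
  have hxS : x ∈ S := subset_closure (by simp)
  have hyS : y ∈ S := subset_closure (by simp)
  have hg0S : g0 ∈ S := by
    rw [hg0, commutatorElement_def]
    exact mul_mem (mul_mem (mul_mem hxS hyS) (inv_mem hxS)) (inv_mem hyS)
  have hZS : Z ≤ S := by rw [← hZg]; exact zpowers_le.mpr hg0S
  -- the commutator homomorphism
  have hcx : ∀ w, ⁅x, w⁆ ∈ center E := fun w => hcommZ x w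
  have hcy : ∀ w, ⁅y, w⁆ ∈ center E := fun w => hcommZ y w
  set φ : E →* (center E) × (center E) := (myCommHom x hcx).prod (myCommHom y hcy) with hφ
  set C := Subgroup.centralizer ({x, y} : Set E) with hC
  have hker : ∀ w : E, φ w = 1 ↔ (⁅x, w⁆ = 1 ∧ ⁅y, w⁆ = 1) := by
    intro w
    rw [hφ, MonoidHom.prod_apply, Prod.ext_iff]
    simp [Subtype.ext_iff]
  have hCker : ∀ w : E, w ∈ C ↔ φ w = 1 := by
    intro w
    rw [hker, hC, mem_centralizer_iff]
    constructor
    · intro h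
      exact ⟨commutatorElement_eq_one_iff_commute.mpr (h x (by simp)),
        commutatorElement_eq_one_iff_commute.mpr (h y (by simp))⟩
    · rintro ⟨h1, h2⟩ h hh
      rw [Set.mem_insert_iff, Set.mem_singleton_iff] at hh
      rcases hh with rfl | rfl
      · exact commutatorElement_eq_one_iff_commute.mp h1
      · exact commutatorElement_eq_one_iff_commute.mp h2
  -- every value of φ is attained on S
  have hspan : ∀ p : (center E) × (center E), ∃ s ∈ S, φ s = p := by
    rintro ⟨⟨a, ha⟩, ⟨b, hb⟩⟩
    obtain ⟨i, hi⟩ := mem_zpowers_iff.mp (show a ∈ zpowers g0 by rw [hZg]; exact ha)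
    obtain ⟨j, hj⟩ := mem_zpowers_iff.mp (show b ∈ zpowers g0 by rw [hZg]; exact hb)
    refine ⟨y ^ i * x ^ (-j), mul_mem (zpow_mem hyS i) (zpow_mem hxS _), ?_⟩
    have hyx0 : ⁅y, x⁆ = g0⁻¹ := by
      rw [hg0]
      exact (commutatorElement_inv x y).symm
    refine Prod.ext (Subtype.ext ?_) (Subtype.ext ?_)
    · show ((myCommHom x hcx) (y ^ i * x ^ (-j)) : E) = a
      rw [map_mul, map_zpow, map_zpow]
      push_cast
      simp [commutatorElement_self, ← hg0, hi]
    · show ((myCommHom y hcy) (y ^ i * x ^ (-j)) : E) = b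
      rw [map_mul, map_zpow, map_zpow]
      push_cast
      simp [commutatorElement_self, hyx0, zpow_neg, inv_zpow, hj]
  -- S and C generate E
  have hsup : S ⊔ C = ⊤ := by
    rw [eq_top_iff]
    intro w _
    obtain ⟨s, hs, hφs⟩ := hspan (φ w)
    have hsC : s⁻¹ * w ∈ C := by
      rw [hCker, map_mul, map_inv, hφs]
      group
    have hw : w = s * (s⁻¹ * w) := by group
    rw [hw]
    exact mul_mem ((le_sup_left : S ≤ S ⊔ C) hs) ((le_sup_right : C ≤ S ⊔ C) hsC)
  -- elements of S and C commute
  have hcommSC : ∀ s ∈ S, ∀ c ∈ C, Commute s c := by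
    intro s hs c hc
    have hle : S ≤ Subgroup.centralizer {c} := by
      rw [hS]
      refine (closure_le _).mpr ?_
      intro t ht
      rw [Set.mem_insert_iff, Set.mem_singleton_iff] at ht
      rw [SetLike.mem_coe, mem_centralizer_iff]
      intro h hh
      rw [Set.mem_singleton_iff] at hh
      have htc : t * c = c * t := by
        rcases ht with h1 | h1
        · rw [h1]
          exact (mem_centralizer_iff.mp hc) x (by simp)
        · rw [h1]
          exact (mem_centralizer_iff.mp hc) y (by simp)
      rw [hh]
      exact htc.symm
    exact ((mem_centralizer_iff.mp (hle hs)) c rfl).symm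
  have hZC : Z ≤ C := by
    intro z hz
    exact mem_centralizer_iff.mpr fun h _ => (mem_center_iff.mp hz h)
  -- S ⊓ C is the center
  have hSCinter : ∀ t, t ∈ S → t ∈ C → t ∈ Z := by
    intro t htS htC
    have hle : S ⊔ C ≤ Subgroup.centralizer {t} := by
      apply sup_le
      · intro s hs
        refine mem_centralizer_iff.mpr fun h hh => ?_
        rw [Set.mem_singleton_iff] at hh
        rw [hh]
        exact (hcommSC s hs t htC).symm
      · intro c hc
        refine mem_centralizer_iff.mpr fun h hh => ?_
        rw [Set.mem_singleton_iff] at hh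
        rw [hh]
        exact hcommSC t htS c hc
    refine mem_center_iff.mpr fun w => ?_
    have hw : w ∈ Subgroup.centralizer {t} := hle (by rw [hsup]; exact mem_top w)
    exact ((mem_centralizer_iff.mp hw) t rfl).symm
  -- cardinality of C
  have hkerC : φ.ker = C := by
    ext w
    rw [MonoidHom.mem_ker]
    exact (hCker w).symm
  have hφsurj : Function.Surjective φ := by
    intro p
    obtain ⟨s, _, hφs⟩ := hspan p
    exact ⟨s, hφs⟩
  have hq0 : q ≠ 0 := hq.pos.ne'
  have hcardC : Nat.card C = q ^ (2 * n + 1) := by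
    have h1 := card_eq_card_quotient_mul_card_subgroup φ.ker
    rw [Nat.card_congr (QuotientGroup.quotientKerEquivOfSurjective φ hφsurj).toEquiv,
      Nat.card_prod, hZcard, hkerC, hcard] at h1
    have h2 : q ^ (2 * n + 3) = (q * q) * q ^ (2 * n + 1) := by ring
    rw [h2] at h1
    exact (Nat.eq_of_mul_eq_mul_left (by positivity) h1).symm
  -- cardinality of S
  have hcardZS : Nat.card (Z.subgroupOf S) = q :=
    (Nat.card_congr (subgroupOfEquivOfLe hZS).toEquiv).trans hZcard
  have hφSsurj : Function.Surjective (φ.comp S.subtype) := by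
    intro p
    obtain ⟨s, hs, hφs⟩ := hspan p
    exact ⟨⟨s, hs⟩, hφs⟩
  have hkerS : (φ.comp S.subtype).ker = C.subgroupOf S := by
    ext w
    rw [MonoidHom.mem_ker, MonoidHom.comp_apply, mem_subgroupOf, hCker]
    rfl
  have hCS : C.subgroupOf S = Z.subgroupOf S := by
    ext w
    rw [mem_subgroupOf, mem_subgroupOf]
    exact ⟨fun h => hSCinter w w.2 h, fun h => hZC h⟩
  have hcardS : Nat.card S = q ^ 3 := by
    have h1 := card_eq_card_quotient_mul_card_subgroup (φ.comp S.subtype).ker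
    rw [Nat.card_congr (QuotientGroup.quotientKerEquivOfSurjective _ hφSsurj).toEquiv,
      Nat.card_prod, hZcard, hkerS, hCS, hcardZS] at h1
    rw [h1]
    ring
  -- the center of S
  have hxyS : ¬ Commute (⟨x, hxS⟩ : S) (⟨y, hyS⟩ : S) := by
    intro h
    apply hxy
    have := congrArg Subtype.val h
    simpa [commute_iff_eq] using this
  have hZS' : center S = Z.subgroupOf S := by
    apply le_antisymm
    · intro t ht
      rw [mem_subgroupOf]
      apply hSCinter _ t.2
      apply mem_centralizer_iff.mpr
      intro h hh
      rw [Set.mem_insert_iff, Set.mem_singleton_iff] at hh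
      rcases hh with h1 | h1
      · have h2 := mem_center_iff.mp ht ⟨x, hxS⟩
        have h3 := congrArg Subtype.val h2
        rw [h1]
        simpa using h3
      · have h2 := mem_center_iff.mp ht ⟨y, hyS⟩
        have h3 := congrArg Subtype.val h2
        rw [h1]
        simpa using h3
    · intro t ht
      rw [mem_subgroupOf] at ht
      apply mem_center_iff.mpr
      intro w
      apply Subtype.ext
      show (w : E) * t = (t : E) * w
      exact mem_center_iff.mp ht w
  have hcardZS' : Nat.card (center S) = q := by rw [hZS']; exact hcardZS
  -- the commutator subgroup of S
  have hcommS : _root_.commutator S = center S := by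
    have hle : _root_.commutator S ≤ center S := by
      rw [_root_.commutator_def, Subgroup.commutator_le]
      intro a _ b _
      rw [hZS', mem_subgroupOf]
      rw [show ((⁅a, b⁆ : S) : E) = ⁅(a : E), (b : E)⁆ from map_commutatorElement S.subtype a b]
      exact hcommZ _ _
    have hne : _root_.commutator S ≠ ⊥ := by
      intro hbot
      have hmem : (⁅(⟨x, hxS⟩ : S), (⟨y, hyS⟩ : S)⁆) ∈ _root_.commutator S := by
        rw [_root_.commutator_def]
        exact commutator_mem_commutator (mem_top _) (mem_top _)
      rw [hbot, mem_bot] at hmem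
      exact hxyS (commutatorElement_eq_one_iff_commute.mp hmem)
    exact my_eq_of_le_of_prime_card hq hle hcardZS' hne
  -- the Frattini subgroup of S
  have hfratS : frattini S = center S := by
    set pr := QuotientGroup.mk' (center S) with hpr
    have hcardQ : Nat.card (S ⧸ center S) = q ^ 2 := by
      have h1 := card_eq_card_quotient_mul_card_subgroup (center (S : Subgroup E))
      rw [hcardS, hcardZS'] at h1
      have h2 : q ^ 3 = q ^ 2 * q := by ring
      rw [h2] at h1
      exact (Nat.eq_of_mul_eq_mul_right hq.pos h1.symm)
    have hxq : (⟨x, hxS⟩ : S) ^ q ∈ center S := by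
      rw [hZS', mem_subgroupOf]
      have : ((( ⟨x, hxS⟩ : S) ^ q : S) : E) = x ^ q := by push_cast; rfl
      rw [this]
      exact hpow x
    have hyq : (⟨y, hyS⟩ : S) ^ q ∈ center S := by
      rw [hZS', mem_subgroupOf]
      have : ((( ⟨y, hyS⟩ : S) ^ q : S) : E) = y ^ q := by push_cast; rfl
      rw [this]
      exact hpow y
    have hxb : pr ⟨x, hxS⟩ ≠ 1 := by
      intro h1
      have h2 := (QuotientGroup.eq_one_iff _).mp h1
      rw [hZS', mem_subgroupOf] at h2
      exact hx h2
    have hyb : pr ⟨y, hyS⟩ ≠ 1 := by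
      intro h1
      have h2 := (QuotientGroup.eq_one_iff _).mp h1
      rw [hZS', mem_subgroupOf] at h2
      apply hxy
      exact mem_center_iff.mp h2 x
    have hordx : orderOf (pr ⟨x, hxS⟩) = q := by
      refine orderOf_eq_prime ?_ hxb
      rw [← map_pow]
      exact (QuotientGroup.eq_one_iff _).mpr hxq
    have hordy : orderOf (pr ⟨y, hyS⟩) = q := by
      refine orderOf_eq_prime ?_ hyb
      rw [← map_pow]
      exact (QuotientGroup.eq_one_iff _).mpr hyq
    have hyx' : pr ⟨y, hyS⟩ ∉ zpowers (pr ⟨x, hxS⟩) := by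
      intro hmem
      obtain ⟨k, hk⟩ := mem_zpowers_iff.mp hmem
      have hzc : ((⟨x, hxS⟩ : S) ^ k)⁻¹ * ⟨y, hyS⟩ ∈ center S := by
        apply (QuotientGroup.eq_one_iff _).mp
        show pr (((⟨x, hxS⟩ : S) ^ k)⁻¹ * ⟨y, hyS⟩) = 1
        rw [map_mul, map_inv, map_zpow, hk]
        group
      apply hxyS
      have heq : (⟨y, hyS⟩ : S) = (⟨x, hxS⟩ : S) ^ k * (((⟨x, hxS⟩ : S) ^ k)⁻¹ * ⟨y, hyS⟩) := by
        group
      rw [heq]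
      refine Commute.mul_right (Commute.zpow_right (Commute.refl _) k) ?_
      exact mem_center_iff.mp hzc _
    have hxy' : pr ⟨x, hxS⟩ ∉ zpowers (pr ⟨y, hyS⟩) := by
      intro hmem
      obtain ⟨k, hk⟩ := mem_zpowers_iff.mp hmem
      have hzc : ((⟨y, hyS⟩ : S) ^ k)⁻¹ * ⟨x, hxS⟩ ∈ center S := by
        apply (QuotientGroup.eq_one_iff _).mp
        show pr (((⟨y, hyS⟩ : S) ^ k)⁻¹ * ⟨x, hxS⟩) = 1
        rw [map_mul, map_inv, map_zpow, hk]
        group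
      apply hxyS
      have heq : (⟨x, hxS⟩ : S) = (⟨y, hyS⟩ : S) ^ k * (((⟨y, hyS⟩ : S) ^ k)⁻¹ * ⟨x, hxS⟩) := by
        group
      rw [heq]
      refine (Commute.mul_right (Commute.zpow_right (Commute.refl _) k) ?_).symm
      exact mem_center_iff.mp hzc _
    have hcoatom : ∀ u : S, pr u ≠ 1 → orderOf (pr u) = q →
        IsCoatom (comap pr (zpowers (pr u))) ∧ Nat.card (comap pr (zpowers (pr u))) = q ^ 2 := by
      intro u hu hord
      have hidx : (comap pr (zpowers (pr u))).index = q := by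
        rw [index_comap_of_surjective _ (QuotientGroup.mk'_surjective _)]
        have h2 := card_mul_index (zpowers (pr u))
        rw [Nat.card_zpowers, hord, hcardQ] at h2
        have h3 : q ^ 2 = q * q := by ring
        rw [h3] at h2
        exact Nat.eq_of_mul_eq_mul_left hq.pos h2
      have hM1card : Nat.card (comap pr (zpowers (pr u))) = q ^ 2 := by
        have h3 := card_mul_index (comap pr (zpowers (pr u)))
        rw [hidx, hcardS] at h3
        have h4 : q ^ 3 = q ^ 2 * q := by ring
        rw [h4] at h3
        exact Nat.eq_of_mul_eq_mul_right hq.pos h3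
      refine ⟨⟨?_, ?_⟩, hM1card⟩
      · intro htop
        have h5 : (1 : S ⧸ center S) ∈ zpowers (pr u) := one_mem _
        have := hidx
        rw [htop, index_top] at this
        exact hq.one_lt.ne' this.symm
      · intro K hK
        have hdvd1 : Nat.card K ∣ q ^ 3 := hcardS ▸ card_subgroup_dvd_card K
        have hdvd2 : q ^ 2 ∣ Nat.card K := by
          rw [← hM1card,
            ← Nat.card_congr (subgroupOfEquivOfLe hK.le).toEquiv]
          exact card_subgroup_dvd_card _
        obtain ⟨j, hj3, hjval⟩ := (Nat.dvd_prime_pow hq).mp hdvd1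
        have h2j : 2 ≤ j := by
          by_contra hlt
          push_neg at hlt
          have ha : q ^ 2 ≤ q ^ j := Nat.le_of_dvd (by positivity) (hjval ▸ hdvd2)
          have hb : q ^ j < q ^ 2 := Nat.pow_lt_pow_right hq.one_lt (by omega)
          omega
        have hj2 : j ≠ 2 := by
          intro h2
          apply hK.ne
          exact my_eq_of_le_of_card_le hK.le (by rw [hjval, h2, hM1card])
        have hj3' : j = 3 := by omega
        apply eq_top_of_card_eq
        rw [hjval, hj3', hcardS]
    obtain ⟨hco1, hca1⟩ := hcoatom ⟨x, hxS⟩ hxb hordx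
    obtain ⟨hco2, hca2⟩ := hcoatom ⟨y, hyS⟩ hyb hordy
    have hMint : comap pr (zpowers (pr ⟨x, hxS⟩)) ⊓ comap pr (zpowers (pr ⟨y, hyS⟩))
        ≤ center S := by
      intro t ht
      rw [mem_inf] at ht
      obtain ⟨ht1, ht2⟩ := ht
      rw [mem_comap] at ht1 ht2
      by_cases hpt : pr t = 1
      · exact (QuotientGroup.eq_one_iff t).mp hpt
      · exfalso
        have h1 : zpowers (pr t) = zpowers (pr ⟨x, hxS⟩) :=
          my_eq_of_le_of_prime_card hq (zpowers_le.mpr ht1)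
            (by rw [Nat.card_zpowers, hordx]) (by rwa [Ne, zpowers_eq_bot])
        have h2 : zpowers (pr t) = zpowers (pr ⟨y, hyS⟩) :=
          my_eq_of_le_of_prime_card hq (zpowers_le.mpr ht2)
            (by rw [Nat.card_zpowers, hordy]) (by rwa [Ne, zpowers_eq_bot])
        apply hyx'
        rw [← h1, h2]
        exact mem_zpowers _
    apply le_antisymm
    · exact le_trans (le_inf (frattini_le_coatom hco1) (frattini_le_coatom hco2)) hMint
    · rw [← hcommS]
      exact my_commutator_le_frattini hq (hpg.to_subgroup S)
  have hES : IsExtraspecial q S := ⟨hpg.to_subgroup S, hcardZS', hcommS, hfratS⟩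
  -- MyPre for C
  have hZC' : center C = Z.subgroupOf C := by
    apply le_antisymm
    · intro t ht
      rw [mem_subgroupOf]
      have hle : S ⊔ C ≤ Subgroup.centralizer {(t : E)} := by
        apply sup_le
        · intro s hs
          refine mem_centralizer_iff.mpr fun h hh => ?_
          rw [Set.mem_singleton_iff] at hh
          rw [hh]
          exact (hcommSC s hs t t.2).symm
        · intro c hc
          refine mem_centralizer_iff.mpr fun h hh => ?_
          rw [Set.mem_singleton_iff] at hh
          rw [hh]
          have h2 := mem_center_iff.mp ht ⟨c, hc⟩
          have h3 := congrArg Subtype.val h2.symm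
          simpa using h3
      refine mem_center_iff.mpr fun w => ?_
      have hw : w ∈ Subgroup.centralizer {(t : E)} := hle (by rw [hsup]; exact mem_top w)
      exact ((mem_centralizer_iff.mp hw) t rfl).symm
    · intro t ht
      rw [mem_subgroupOf] at ht
      apply mem_center_iff.mpr
      intro w
      apply Subtype.ext
      show (w : E) * t = (t : E) * w
      exact mem_center_iff.mp ht w
  have hcardZC : Nat.card (center C) = q := by
    rw [hZC']
    exact (Nat.card_congr (subgroupOfEquivOfLe hZC).toEquiv).trans hZcard
  have hPreC : MyPre q C := by
    refine ⟨hpg.to_subgroup C, hcardZC, fun a b => ?_, fun g => ?_⟩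
    · rw [hZC', mem_subgroupOf]
      rw [show ((⁅a, b⁆ : C) : E) = ⁅(a : E), (b : E)⁆ from map_commutatorElement C.subtype a b]
      exact hcommZ _ _
    · rw [hZC', mem_subgroupOf]
      have : (((g : C) ^ q : C) : E) = (g : E) ^ q := by push_cast; rfl
      rw [this]
      exact hpow (g : E)
  have hmapZ : Z ≤ map C.subtype (center C) := by
    intro z hz
    have hmem : (⟨z, hZC hz⟩ : C) ∈ center C := by
      rw [hZC']
      exact mem_subgroupOf.mpr hz
    exact ⟨⟨z, hZC hz⟩, hmem, rfl⟩
  exact ⟨S, C, hES, hcardS, hZS, hZC, hcommSC, hsup, hcardC, hPreC, hmapZ⟩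

end Main

section Key

universe u

lemma my_key {q : ℕ} (hq : q.Prime) :
    ∀ (n : ℕ) (E : Type u) [Group E] [Finite E], MyPre q E →
    Nat.card E = q ^ (2 * n + 3) →
    ∃ S : Fin (n + 1) → Subgroup E,
      (∀ i, IsExtraspecial q (S i) ∧ Nat.card (S i) = q ^ 3 ∧
        Subgroup.center E ≤ S i) ∧
      (∀ i j, i ≠ j → ∀ x ∈ S i, ∀ y ∈ S j, Commute x y) ∧
      iSup S = ⊤ := by
  intro n
  induction n with
  | zero =>
    intro E _ _ hP hcard
    obtain ⟨S, C, hES, hcardS, hZS, hZC, hcommSC, hsup, hcardC, hPreC, hmapZ⟩ :=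
      my_exists_S_C hq E hP 0 hcard
    have hcc : Nat.card C = Nat.card (center E) := by
      rw [hcardC, hP.2.1]
      norm_num
    have hCZ : center E = C := my_eq_of_le_of_card_le hZC hcc.le
    have hCS : C ≤ S := hCZ ▸ hZS
    have hStop : S = ⊤ := by rw [← hsup, sup_eq_left.mpr hCS]
    refine ⟨fun _ => S, fun _ => ⟨hES, hcardS, hZS⟩, ?_, ?_⟩
    · intro i j hij
      have hi := i.isLt
      have hj := j.isLt
      exact absurd (Fin.ext (by omega)) hij
    · rw [iSup_const]
      exact hStop
  | succ n ih =>
    intro E _ _ hP hcard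
    obtain ⟨S, C, hES, hcardS, hZS, hZC, hcommSC, hsup, hcardC, hPreC, hmapZ⟩ :=
      my_exists_S_C hq E hP (n + 1) hcard
    have he : 2 * (n + 1) + 1 = 2 * n + 3 := by omega
    have hcardC' : Nat.card C = q ^ (2 * n + 3) := by rw [hcardC, he]
    obtain ⟨T, hT1, hT2, hT3⟩ := ih C hPreC hcardC'
    refine ⟨Fin.cases S (fun i => map C.subtype (T i)), ?_, ?_, ?_⟩
    · refine Fin.cases ?_ ?_
      · simpa using ⟨hES, hcardS, hZS⟩
      · intro i
        simp only [Fin.cases_succ]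
        refine ⟨my_isExtraspecial_congr
          (equivMapOfInjective (T i) C.subtype (subtype_injective C)) (hT1 i).1, ?_, ?_⟩
        · rw [← (hT1 i).2.1]
          exact (Nat.card_congr
            (equivMapOfInjective (T i) C.subtype (subtype_injective C)).toEquiv).symm
        · exact le_trans hmapZ (map_mono (hT1 i).2.2)
    · refine Fin.cases ?_ ?_
      · refine Fin.cases ?_ ?_
        · intro hij
          exact absurd rfl hij
        · intro j _ a ha b hb
          simp only [Fin.cases_zero] at ha
          simp only [Fin.cases_succ] at hb
          obtain ⟨c, hc, rfl⟩ := hb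
          exact hcommSC a ha c c.2
      · intro i
        refine Fin.cases ?_ ?_
        · intro _ a ha b hb
          simp only [Fin.cases_succ] at ha
          simp only [Fin.cases_zero] at hb
          obtain ⟨c, hc, rfl⟩ := ha
          exact (hcommSC b hb c c.2).symm
        · intro j hij a ha b hb
          simp only [Fin.cases_succ] at ha hb
          obtain ⟨c1, hc1, rfl⟩ := ha
          obtain ⟨c2, hc2, rfl⟩ := hb
          have hne : i ≠ j := fun h => hij (congrArg Fin.succ h)
          have hcm := hT2 i j hne c1 hc1 c2 hc2
          have := congrArg Subtype.val hcm
          simpa using hcm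
    · apply le_antisymm le_top
      rw [← hsup]
      apply sup_le
      · exact le_iSup_of_le 0 (by simp)
      · have h1 : C ≤ map C.subtype (iSup T) := by
          rw [hT3, ← MonoidHom.range_eq_map, range_subtype]
        refine le_trans h1 ?_
        rw [Subgroup.map_iSup]
        exact iSup_le fun i => le_iSup_of_le i.succ (by simp)

end Key

/-- Every extraspecial group of order `q ^ (2m + 1)` is a central product of `m`
extraspecial subgroups of order `q ^ 3`: there are subgroups `S 0, …, S (m-1)`,
each extraspecial of order `q ^ 3` and containing the center of `E`, which
pairwise commute elementwise and generate `E`. -/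
theorem extraspecial_is_central_product_of_order_q_cubed
    (q m : ℕ) (hq : q.Prime) (hm : 0 < m)
    (E : Type*) [Group E] [Finite E]
    (hE : IsExtraspecial q E) (hcard : Nat.card E = q ^ (2 * m + 1)) :
    ∃ S : Fin m → Subgroup E,
      (∀ i, IsExtraspecial q (S i) ∧ Nat.card (S i) = q ^ 3 ∧
        Subgroup.center E ≤ S i) ∧
      (∀ i j, i ≠ j → ∀ x ∈ S i, ∀ y ∈ S j, Commute x y) ∧
      iSup S = ⊤ := by
  obtain ⟨n, rfl⟩ : ∃ n, m = n + 1 := ⟨m - 1, by omega⟩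
  have he : 2 * (n + 1) + 1 = 2 * n + 3 := by omega
  have hcard' : Nat.card E = q ^ (2 * n + 3) := by rw [hcard, he]
  exact my_key hq n E (my_pre_of_isExtraspecial hq hE) hcard'
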